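/- Let f(θ, θ'; G, H, q) = [G + sqrt(G²+q²)] θ + sqrt(2H(G + sqrt(G²+q²))) θ' be the LQR feedback law. Given two parameter sets (G_a, H_a, q_a) and (G_b, H_b, q_b) with all values positive and q_a/G_a = q_b/G_b, and ω_a = sqrt(G_a/H_a), ω_b = sqrt(G_b/H_b), then for all θ, θ': f(θ, θ'; G_b, H_b, q_b) = (G_b/G_a) · f(θ, (ω_a/ω_b) θ'; G_a, H_a, q_a). -/

import Mathlib

/-!
Both LQR gains are built from `S(G, q) = G + √(G² + q²)`, which is positively homogeneous of
degree one. Similarity `q_b / G_b = q_a / G_a` means `(G_b, q_b) = c • (G_a, q_a)` with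
`c = G_b / G_a > 0`, so the position gain scales by `c`, and the velocity gain `√(2 H S)` scales by
`c · ω_a / ω_b`, since `2 H_b c S / (c² · 2 H_a S) = (G_a / H_a) / (G_b / H_b)`.
-/

open Real

theorem add_sqrt_sq_add_sq_mul {c : ℝ} (hc : 0 ≤ c) (G q : ℝ) :
    c * G + √((c * G) ^ 2 + (c * q) ^ 2) = c * (G + √(G ^ 2 + q ^ 2)) := by
  rw [show (c * G) ^ 2 + (c * q) ^ 2 = c ^ 2 * (G ^ 2 + q ^ 2) by ring,
    sqrt_mul (sq_nonneg c), sqrt_sq hc]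
  ring

theorem add_sqrt_sq_add_sq_nonneg (G q : ℝ) : 0 ≤ G + √(G ^ 2 + q ^ 2) := by
  have : |G| ≤ √(G ^ 2 + q ^ 2) := by
    rw [← sqrt_sq_eq_abs]
    exact sqrt_le_sqrt (le_add_of_nonneg_right (sq_nonneg q))
  linarith [neg_abs_le G]

theorem sqrt_two_mul_mul_rescale {c G Ha S : ℝ} (hc : 0 < c) (hG : 0 < G) (hHa : 0 < Ha)
    (hS : 0 ≤ S) (Hb : ℝ) :
    √(2 * Hb * (c * S)) = c * √(2 * Ha * S) * (√(G / Ha) / √(c * G / Hb)) := by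
  rw [← sqrt_div (by positivity), ← sqrt_sq hc.le, ← sqrt_mul (sq_nonneg c),
    ← sqrt_mul (by positivity), sqrt_sq hc.le]
  congr 1
  field_simp

theorem lqr_transfer_between_similar_pendulums_general
    (f : ℝ → ℝ → ℝ → ℝ → ℝ → ℝ)
    (hf : ∀ θ θ' G H q, f θ θ' G H q = (G + Real.sqrt (G ^ 2 + q ^ 2)) * θ +
        Real.sqrt (2 * H * (G + Real.sqrt (G ^ 2 + q ^ 2))) * θ')
    (Ga Ha qa Gb Hb qb : ℝ)
    (hGa : 0 < Ga) (hHa : 0 < Ha)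
    (hGb : 0 < Gb)
    (hsim : qa / Ga = qb / Gb)
    (ωa ωb : ℝ) (hωa : ωa = Real.sqrt (Ga / Ha)) (hωb : ωb = Real.sqrt (Gb / Hb)) :
    ∀ θ θ', f θ θ' Gb Hb qb = (Gb / Ga) * f θ ((ωa / ωb) * θ') Ga Ha qa := by
  intro θ θ'
  obtain ⟨c, hc, rfl, rfl⟩ : ∃ c, 0 < c ∧ Gb = c * Ga ∧ qb = c * qa := by
    refine ⟨Gb / Ga, div_pos hGb hGa, (div_mul_cancel₀ Gb hGa.ne').symm, ?_⟩
    rw [div_eq_div_iff hGa.ne' hGb.ne'] at hsim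
    field_simp
    linarith
  rw [hf, hf, hωa, hωb, mul_div_cancel_right₀ c hGa.ne', add_sqrt_sq_add_sq_mul hc.le,
    sqrt_two_mul_mul_rescale hc hGa hHa (add_sqrt_sq_add_sq_nonneg Ga qa)]
  ring

theorem lqr_transfer_between_similar_pendulums
    (f : ℝ → ℝ → ℝ → ℝ → ℝ → ℝ)
    (hf : ∀ θ θ' G H q, f θ θ' G H q = (G + Real.sqrt (G ^ 2 + q ^ 2)) * θ +
        Real.sqrt (2 * H * (G + Real.sqrt (G ^ 2 + q ^ 2))) * θ')
    (Ga Ha qa Gb Hb qb : ℝ)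
    (hGa : 0 < Ga) (hHa : 0 < Ha) (hqa : 0 < qa)
    (hGb : 0 < Gb) (hHb : 0 < Hb) (hqb : 0 < qb)
    (hsim : qa / Ga = qb / Gb)
    (ωa ωb : ℝ) (hωa : ωa = Real.sqrt (Ga / Ha)) (hωb : ωb = Real.sqrt (Gb / Hb)) :
    ∀ θ θ', f θ θ' Gb Hb qb = (Gb / Ga) * f θ ((ωa / ωb) * θ') Ga Ha qa :=
  lqr_transfer_between_similar_pendulums_general f hf Ga Ha qa Gb Hb qb hGa hHa hGb hsim ωa ωb hωa
    hωb
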